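/- Fix 1 ≤ p ≤ q, a_1,…,a_p ∈ ℝ∖(−ℕ) and b_1,…,b_p > 0. If there is a sequence of tuples (b_{p+1},…,b_q) of positive reals tending to +∞ in all coordinates such that pFq(a; b; ·) has only real zeros along the sequence, then pFp(a_1,…,a_p; b_1,…,b_p; ·) has only real zeros. -/

import Mathlib

open scoped BigOperators
open Filter Topology

/-- Rising factorial of a real number. -/
noncomputable def risingR (a : ℝ) (n : ℕ) : ℝ := (ascPochhammer ℝ n).eval a

lemma risingR_zero (a : ℝ) : risingR a 0 = 1 := by simp [risingR]
lemma risingR_succ (a : ℝ) (n : ℕ) : risingR a (n+1) = risingR a n * (a + n) :=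
  ascPochhammer_succ_eval n a
lemma risingR_pos {a : ℝ} (ha : 0 < a) (n : ℕ) : 0 < risingR a n :=
  ascPochhammer_pos n a ha
lemma risingR_ne_zero {a : ℝ} (ha : ∀ k : ℕ, a ≠ -(k : ℝ)) (n : ℕ) : risingR a n ≠ 0 := by
  induction n with
  | zero => simp [risingR_zero]
  | succ n ih =>
    rw [risingR_succ]
    exact mul_ne_zero ih (fun h => ha n (by linarith))
lemma tendsto_shift_div {α β : ℝ} (hβ : 0 < β) :
    Tendsto (fun n : ℕ => (α + n) / (β + n)) atTop (𝓝 1) := by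
  have hβn : Tendsto (fun n : ℕ => β + (n:ℝ)) atTop atTop :=
    tendsto_atTop_add_const_left _ _ tendsto_natCast_atTop_atTop
  have h0' : Tendsto (fun n : ℕ => 1 + (α - β) * (β + (n:ℝ))⁻¹) atTop (𝓝 (1 + (α - β) * 0)) :=
    tendsto_const_nhds.add (tendsto_const_nhds.mul hβn.inv_tendsto_atTop)
  simp only [mul_zero, add_zero] at h0'
  refine h0'.congr' ?_
  filter_upwards [hβn.eventually_gt_atTop 0] with n hn
  field_simp
  ring

noncomputable def hypCoef {p r : ℕ} (a : Fin p → ℝ) (b : Fin p → ℝ) (c : Fin r → ℝ)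
    (n : ℕ) : ℝ :=
  (∏ i, risingR (a i) n) /
    ((∏ i, risingR (b i) n) * (∏ j, risingR (c j) n) * n.factorial)

variable {p r : ℕ} {a b : Fin p → ℝ} {c : Fin r → ℝ}

lemma hypCoef_ne_zero (ha : ∀ i, ∀ k : ℕ, a i ≠ -(k : ℝ)) (hb : ∀ i, 0 < b i)
    (hc : ∀ j, 0 < c j) (n : ℕ) : hypCoef a b c n ≠ 0 := by
  apply div_ne_zero
  · exact Finset.prod_ne_zero_iff.2 fun i _ => risingR_ne_zero (ha i) n
  · refine mul_ne_zero (mul_ne_zero ?_ ?_) (by exact_mod_cast n.factorial_ne_zero)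
    · exact (Finset.prod_pos fun i _ => risingR_pos (hb i) n).ne'
    · exact (Finset.prod_pos fun j _ => risingR_pos (hc j) n).ne'

lemma hypCoef_succ (n : ℕ) :
    hypCoef a b c (n+1) = hypCoef a b c n *
      ((∏ i, (a i + n)) / ((∏ i, (b i + n)) * (∏ j, (c j + n)) * (n+1))) := by
  unfold hypCoef
  rw [Nat.factorial_succ]
  simp only [risingR_succ, Finset.prod_mul_distrib]
  rw [Nat.cast_mul]
  rw [div_mul_div_comm]
  congr 1
  push_cast
  ring

lemma summable_hypCoef (ha : ∀ i, ∀ k : ℕ, a i ≠ -(k : ℝ)) (hb : ∀ i, 0 < b i)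
    (hc : ∀ j, 0 < c j) (R : ℝ) :
    Summable (fun n => |hypCoef a b c n| * R ^ n) := by
  -- reduce to S := |R| + 1 > 0
  set S : ℝ := |R| + 1 with hS
  have hS0 : 0 < S := by positivity
  have hRS : |R| ≤ S := by simp [hS]
  have key : Summable (fun n => |hypCoef a b c n| * S ^ n) := by
    apply summable_of_ratio_test_tendsto_lt_one (l := 0) one_pos
    · exact Eventually.of_forall fun n =>
        mul_ne_zero (abs_ne_zero.2 (hypCoef_ne_zero ha hb hc n)) (pow_ne_zero _ hS0.ne')
    · -- ratio tends to 0
      have hub : Tendsto (fun n : ℕ =>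
          (∏ i, |a i + n| / (b i + n)) * (S / (n + 1))) atTop (𝓝 0) := by
        have h1 : Tendsto (fun n : ℕ => ∏ i, |a i + n| / (b i + n)) atTop
            (𝓝 (∏ _i : Fin p, (1:ℝ))) := by
          apply tendsto_finset_prod
          intro i _
          have := tendsto_shift_div (α := a i) (β := b i) (hb i)
          refine this.congr' ?_
          filter_upwards [eventually_gt_atTop ⌈|a i|⌉₊] with n hn
          have : 0 ≤ a i + n := by
            have h2 : |a i| ≤ n := le_trans (Nat.le_ceil _) (by exact_mod_cast hn.le)
            have := abs_le.1 h2
            linarith [this.1]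
          rw [abs_of_nonneg this]
        simp only [Finset.prod_const_one] at h1
        have h2 : Tendsto (fun n : ℕ => S / ((n:ℝ) + 1)) atTop (𝓝 0) := by
          have := tendsto_one_div_add_atTop_nhds_zero_nat (𝕜 := ℝ)
          have h3 := this.const_mul S
          simpa [div_eq_mul_inv, mul_comm] using h3
        have := h1.mul h2
        simpa using this
      have hlb : Tendsto (fun _ : ℕ => (0:ℝ)) atTop (𝓝 0) := tendsto_const_nhds
      refine tendsto_of_tendsto_of_tendsto_of_le_of_le' hlb hub ?_ ?_
      · exact Eventually.of_forall fun n => div_nonneg (norm_nonneg _) (norm_nonneg _)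
      · filter_upwards [eventually_ge_atTop 1] with n hn
        -- compute ratio
        have hPB : 0 < (∏ i, (b i + n)) := Finset.prod_pos fun i _ => by
          have := Nat.cast_nonneg (α := ℝ) n; have := hb i; linarith
        have hPC : 1 ≤ (∏ j, (c j + n)) := Finset.prod_le_prod (fun _ _ => zero_le_one)
          (fun j _ => by
            have : (1:ℝ) ≤ n := by exact_mod_cast hn
            have := hc j; linarith) |>.trans_eq' (by simp)
        have hc0 : 0 < |hypCoef a b c n| := abs_pos.2 (hypCoef_ne_zero ha hb hc n)
        have hSn : 0 < S ^ n := pow_pos hS0 n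
        have hn1 : (0:ℝ) < (n:ℝ) + 1 := by positivity
        set D : ℝ := (∏ i, (a i + (n:ℝ))) /
            ((∏ i, (b i + (n:ℝ))) * (∏ j, (c j + (n:ℝ))) * ((n:ℝ)+1)) with hD
        have hsplit : |hypCoef a b c (n+1)| * S ^ (n+1)
            = (|hypCoef a b c n| * S ^ n) * (|D| * S) := by
          rw [hypCoef_succ, abs_mul, pow_succ]
          push_cast
          ring
        have heq : ‖|hypCoef a b c (n+1)| * S ^ (n+1)‖ / ‖|hypCoef a b c n| * S ^ n‖
            = |D| * S := by
          rw [Real.norm_eq_abs, Real.norm_eq_abs,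
            abs_of_nonneg (mul_nonneg (abs_nonneg _) (pow_nonneg hS0.le _)),
            abs_of_nonneg (mul_nonneg (abs_nonneg _) (pow_nonneg hS0.le _)),
            hsplit, mul_div_cancel_left₀ _ (by positivity)]
        have hPC0 : (0:ℝ) < ∏ j, (c j + (n:ℝ)) := lt_of_lt_of_le one_pos hPC
        have hDabs : |D| = (∏ i, |a i + (n:ℝ)|) /
            ((∏ i, (b i + (n:ℝ))) * (∏ j, (c j + (n:ℝ))) * ((n:ℝ)+1)) := by
          rw [hD, abs_div, Finset.abs_prod, abs_of_pos (by positivity)]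
        rw [heq, hDabs, Finset.prod_div_distrib, div_mul_eq_mul_div, div_mul_div_comm]
        have hnum : (0:ℝ) ≤ (∏ i, |a i + (n:ℝ)|) * S :=
          mul_nonneg (Finset.prod_nonneg fun i _ => abs_nonneg _) hS0.le
        rw [div_le_div_iff₀ (by positivity) (by positivity)]
        have key : (0:ℝ) ≤ ((∏ i, |a i + (n:ℝ)|) * S) *
            ((∏ i, (b i + (n:ℝ))) * ((n:ℝ)+1)) * ((∏ j, (c j + (n:ℝ))) - 1) :=
          mul_nonneg (mul_nonneg hnum (mul_pos hPB hn1).le) (by linarith)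
        nlinarith [key]
  refine key.of_norm_bounded ?_
  intro n
  rw [Real.norm_eq_abs, abs_mul, abs_abs, abs_pow]
  exact mul_le_mul_of_nonneg_left (pow_le_pow_left₀ (abs_nonneg _) hRS n) (abs_nonneg _)

lemma summable_hyp_norm (ha : ∀ i, ∀ k : ℕ, a i ≠ -(k : ℝ)) (hb : ∀ i, 0 < b i)
    (hc : ∀ j, 0 < c j) (x : ℂ) :
    Summable (fun n => ‖((hypCoef a b c n : ℝ) : ℂ) * x ^ n‖) := by
  have := summable_hypCoef ha hb hc (R := ‖x‖)
  refine this.congr fun n => ?_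
  rw [norm_mul, norm_pow, Complex.norm_real, Real.norm_eq_abs]

-- the entire function given by the coefficients
lemma hyp_entire (ha : ∀ i, ∀ k : ℕ, a i ≠ -(k : ℝ)) (hb : ∀ i, 0 < b i)
    (hc : ∀ j, 0 < c j) :
    AnalyticOnNhd ℂ (fun x : ℂ => ∑' n, ((hypCoef a b c n : ℝ) : ℂ) * x ^ n) Set.univ := by
  set P := FormalMultilinearSeries.ofScalars ℂ (fun n => ((hypCoef a b c n : ℝ) : ℂ)) with hP
  have hrad : P.radius = ⊤ := by
    apply FormalMultilinearSeries.radius_eq_top_of_summable_norm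
    intro rr
    have := summable_hypCoef ha hb hc (R := (rr : ℝ))
    refine this.congr fun n => ?_
    rw [hP, FormalMultilinearSeries.ofScalars_norm, Complex.norm_real, Real.norm_eq_abs]
  have hball : HasFPowerSeriesOnBall
      (fun x : ℂ => ∑' n, ((hypCoef a b c n : ℝ) : ℂ) * x ^ n) P 0 ⊤ := by
    have h0 : (0:ENNReal) < P.radius := by rw [hrad]; exact ENNReal.zero_lt_top
    have := P.hasFPowerSeriesOnBall h0
    rw [hrad] at this
    refine this.congr fun x _ => ?_
    show P.sum x = (∑' n, ((hypCoef a b c n : ℝ) : ℂ) * x ^ n)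
    exact tsum_congr fun n => by
      rw [hP, FormalMultilinearSeries.ofScalars_apply_eq, smul_eq_mul]
  intro z _
  exact hball.analyticAt_of_mem (by simp [edist_lt_top])

lemma risingR_ge_pow {x : ℝ} (hx : 0 < x) (n : ℕ) : x ^ n ≤ risingR x n := by
  induction n with
  | zero => simp [risingR_zero]
  | succ n ih =>
    rw [risingR_succ, pow_succ]
    have h1 : 0 < risingR x n := risingR_pos hx n
    have h2 : x ≤ x + n := by have := Nat.cast_nonneg (α := ℝ) n; linarith
    nlinarith [pow_pos hx n]

lemma tendsto_x_div_x_add (m : ℝ) :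
    Tendsto (fun x : ℝ => x / (x + m)) atTop (𝓝 1) := by
  have h1 : Tendsto (fun x : ℝ => x + m) atTop atTop :=
    tendsto_atTop_add_const_right _ _ tendsto_id
  have h0 : Tendsto (fun x : ℝ => 1 + (-m) * (x + m)⁻¹) atTop (𝓝 (1 + (-m) * 0)) :=
    tendsto_const_nhds.add (tendsto_const_nhds.mul h1.inv_tendsto_atTop)
  simp only [mul_zero, add_zero] at h0
  refine h0.congr' ?_
  filter_upwards [h1.eventually_gt_atTop 0] with x hx
  field_simp
  ring

lemma tendsto_pow_div_risingR (n : ℕ) :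
    Tendsto (fun x : ℝ => x ^ n / risingR x n) atTop (𝓝 1) := by
  induction n with
  | zero => simp [risingR_zero]
  | succ n ih =>
    have h3 : Tendsto (fun x : ℝ => (x ^ n / risingR x n) * (x / (x + n))) atTop
        (𝓝 (1 * 1)) := ih.mul (tendsto_x_div_x_add (n : ℝ))
    rw [one_mul] at h3
    refine h3.congr' ?_
    filter_upwards [eventually_gt_atTop 0] with x hx
    rw [risingR_succ, pow_succ]
    have h4 : risingR x n ≠ 0 := (risingR_pos hx n).ne'
    have h5 : x + n ≠ 0 := by have := Nat.cast_nonneg (α := ℝ) n; linarith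
    field_simp

lemma hypCoef_mul_pow (hb : ∀ i, 0 < b i) (hc : ∀ j, 0 < c j) (n : ℕ) :
    hypCoef a b c n * (∏ j, c j) ^ n
      = hypCoef a b (fun _ : Fin 0 => (1:ℝ)) n * ∏ j, ((c j) ^ n / risingR (c j) n) := by
  have hPB : (0:ℝ) < ∏ i, risingR (b i) n := Finset.prod_pos fun i _ => risingR_pos (hb i) n
  have hPC : (0:ℝ) < ∏ j, risingR (c j) n := Finset.prod_pos fun j _ => risingR_pos (hc j) n
  have hF : ((n.factorial : ℝ)) ≠ 0 := by exact_mod_cast n.factorial_ne_zero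
  unfold hypCoef
  rw [Finset.prod_div_distrib, ← Finset.prod_pow]
  simp only [Finset.univ_eq_empty, Finset.prod_empty, one_mul]
  rw [div_mul_eq_mul_div, div_mul_div_comm]
  rw [div_eq_div_iff (by positivity) (by positivity)]
  ring


/-- `pFq(a; b, c; ·)` as a function of `x ∈ ℂ`, with real parameters `a` (numerator)
and `b, c` (denominator). -/
noncomputable def hypFun {p r : ℕ} (a : Fin p → ℝ) (b : Fin p → ℝ) (c : Fin r → ℝ)
    (x : ℂ) : ℂ :=
  ∑' n : ℕ,
    (((∏ i, risingR (a i) n) /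
        ((∏ i, risingR (b i) n) * (∏ j, risingR (c j) n) * n.factorial) : ℝ) : ℂ) * x ^ n

lemma hypFun_eq {p r : ℕ} (a : Fin p → ℝ) (b : Fin p → ℝ) (c : Fin r → ℝ) (x : ℂ) :
    hypFun a b c x = ∑' n : ℕ, ((hypCoef a b c n : ℝ) : ℂ) * x ^ n := rfl

/-- If along some sequence of tuples `(b_{p+1},…,b_q)` (here `c k`, with `q = p + r`)
tending to `+∞` in every coordinate, `pFq(a; b, c k; ·)` has only real zeros, then
`pFp(a; b; ·)` has only real zeros. -/
theorem pFp_real_zeros_of_pFq_real_zeros {p r : ℕ} (hp : 1 ≤ p)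
    (a : Fin p → ℝ) (b : Fin p → ℝ)
    (ha : ∀ i, ∀ k : ℕ, a i ≠ -(k : ℝ)) (hb : ∀ i, 0 < b i)
    (c : ℕ → Fin r → ℝ) (hc : ∀ k j, 0 < c k j)
    (hctend : ∀ j, Tendsto (fun k => c k j) atTop atTop)
    (hzeros : ∀ k, ∀ z : ℂ, hypFun a b (c k) z = 0 → z.im = 0) :
    ∀ z : ℂ, hypFun a b (fun j : Fin 0 => (1 : ℝ)) z = 0 → z.im = 0 := by
  intro z₀ hz₀
  by_contra him
  have hc1 : ∀ j : Fin 0, 0 < (fun _ : Fin 0 => (1:ℝ)) j := fun j => one_pos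
  set B : ℕ → ℝ := hypCoef a b (fun _ : Fin 0 => (1:ℝ)) with hB
  set F : ℂ → ℂ := fun x => ∑' n, ((B n : ℝ) : ℂ) * x ^ n with hF
  have hFz₀ : F z₀ = 0 := hz₀
  have hFanal : AnalyticOnNhd ℂ F Set.univ := hyp_entire ha hb hc1
  have hFcont : Continuous F :=
    continuous_iff_continuousAt.2 fun z => (hFanal z (Set.mem_univ z)).continuousAt
  have hB0 : B 0 = 1 := by simp [hB, hypCoef, risingR_zero]
  have hF0 : F 0 = 1 := by
    show (∑' n : ℕ, ((B n : ℝ) : ℂ) * (0:ℂ) ^ n) = 1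
    rw [tsum_eq_single 0 (fun n hn => by simp [zero_pow hn])]
    simp [hB0]
  -- isolated zeros
  have hnotev : ¬ (∀ᶠ z in 𝓝 z₀, F z = 0) := by
    intro h
    have h2 := hFanal.eqOn_zero_of_preconnected_of_eventuallyEq_zero isPreconnected_univ
      (Set.mem_univ z₀) h
    have := h2 (Set.mem_univ (0:ℂ))
    rw [hF0] at this
    simp at this
  have hne : ∀ᶠ z in 𝓝[≠] z₀, F z ≠ 0 :=
    ((hFanal z₀ (Set.mem_univ z₀)).eventually_eq_zero_or_eventually_ne_zero).resolve_left hnotev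
  rw [eventually_nhdsWithin_iff] at hne
  rw [Metric.eventually_nhds_iff] at hne
  obtain ⟨ε, hε, hεne⟩ := hne
  -- radius
  set rr : ℝ := min (ε/2) (|z₀.im|/2) with hrr
  have him' : 0 < |z₀.im| := abs_pos.2 him
  have hrr0 : 0 < rr := lt_min (by linarith) (by linarith)
  have hsphere_ne : ∀ z ∈ Metric.sphere z₀ rr, F z ≠ 0 := by
    intro z hz
    rw [Metric.mem_sphere] at hz
    refine hεne (by rw [hz]; exact lt_of_le_of_lt (min_le_left _ _) (by linarith)) ?_
    simp only [Set.mem_compl_iff, Set.mem_singleton_iff]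
    intro h
    rw [h, dist_self] at hz
    exact hrr0.ne hz
  have hball_im : ∀ z ∈ Metric.closedBall z₀ rr, z.im ≠ 0 := by
    intro z hz
    rw [Metric.mem_closedBall] at hz
    have h1 : |z.im - z₀.im| ≤ dist z z₀ := by
      rw [Complex.dist_eq]
      exact (Complex.abs_im_le_norm (z - z₀)).trans_eq' (by simp)
    have h2 : rr ≤ |z₀.im|/2 := min_le_right _ _
    intro h0
    rw [h0, zero_sub, abs_neg] at h1
    linarith
  -- minimum on the sphere
  have hsph_compact : IsCompact (Metric.sphere z₀ rr) := isCompact_sphere z₀ rr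
  have hsph_ne : (Metric.sphere z₀ rr).Nonempty := NormedSpace.sphere_nonempty.2 hrr0.le
  obtain ⟨z₁, hz₁s, hz₁m⟩ := hsph_compact.exists_isMinOn hsph_ne
    (hFcont.norm.continuousOn)
  set m : ℝ := ‖F z₁‖ with hm
  have hm0 : 0 < m := norm_pos_iff.2 (hsphere_ne z₁ hz₁s)
  -- rescaled functions
  set lam : ℕ → ℝ := fun k => ∏ j, c k j with hlamdef
  have hlam : ∀ k, 0 < lam k := fun k => Finset.prod_pos fun j _ => hc k j
  set v : ℕ → ℕ → ℝ := fun k n => hypCoef a b (c k) n * (lam k) ^ n with hvdef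
  set t : ℕ → ℕ → ℝ := fun k n => ∏ j, ((c k j) ^ n / risingR (c k j) n) with htdef
  have hv : ∀ k n, v k n = B n * t k n := fun k n => hypCoef_mul_pow hb (hc k) n
  have ht0 : ∀ k n, 0 < t k n := fun k n => Finset.prod_pos fun j _ =>
    div_pos (pow_pos (hc k j) n) (risingR_pos (hc k j) n)
  have ht1 : ∀ k n, t k n ≤ 1 := fun k n => Finset.prod_le_one
    (fun j _ => (div_pos (pow_pos (hc k j) n) (risingR_pos (hc k j) n)).le)
    (fun j _ => div_le_one_of_le₀ (risingR_ge_pow (hc k j) n) (risingR_pos (hc k j) n).le)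
  have httend : ∀ n, Tendsto (fun k => t k n) atTop (𝓝 1) := by
    intro n
    have h1 : Tendsto (fun k => ∏ j, ((c k j) ^ n / risingR (c k j) n)) atTop
        (𝓝 (∏ _j : Fin r, (1:ℝ))) :=
      tendsto_finset_prod _ fun j _ => (tendsto_pow_div_risingR n).comp (hctend j)
    rw [Finset.prod_const_one] at h1
    exact h1
  set g : ℕ → ℂ → ℂ := fun k x => hypFun a b (c k) (((lam k : ℝ) : ℂ) * x) with hgdef
  have hgt : ∀ k x, g k x = ∑' n, ((v k n : ℝ) : ℂ) * x ^ n := by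
    intro k x
    show hypFun a b (c k) (((lam k : ℝ) : ℂ) * x) = _
    rw [hypFun_eq]
    refine tsum_congr fun n => ?_
    rw [hvdef]
    push_cast
    rw [mul_pow]
    ring
  have hganal : ∀ k, Differentiable ℂ (g k) := by
    intro k
    have h1 : Differentiable ℂ (fun y : ℂ => ∑' n, ((hypCoef a b (c k) n : ℝ):ℂ) * y ^ n) :=
      fun y => ((hyp_entire ha hb (hc k)) y (Set.mem_univ y)).differentiableAt
    have h2 : Differentiable ℂ (fun x : ℂ => ((lam k : ℝ):ℂ) * x) :=
      differentiable_id.const_mul _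
    exact h1.comp h2
  have hgz : ∀ k (z : ℂ), z.im ≠ 0 → g k z ≠ 0 := by
    intro k z hzim h0
    have h1 := hzeros k _ h0
    rw [Complex.mul_im] at h1
    simp only [Complex.ofReal_re, Complex.ofReal_im, zero_mul, add_zero] at h1
    exact hzim (by
      rcases mul_eq_zero.1 h1 with h | h
      · exact absurd h (hlam k).ne'
      · exact h)
  -- radius bound
  set R : ℝ := ‖z₀‖ + rr with hRdef
  have hR0 : (0:ℝ) ≤ R := by positivity
  have hzR : ∀ z ∈ Metric.closedBall z₀ rr, ‖z‖ ≤ R := by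
    intro z hz
    rw [Metric.mem_closedBall, dist_eq_norm] at hz
    calc ‖z‖ = ‖z₀ + (z - z₀)‖ := by ring_nf
    _ ≤ ‖z₀‖ + ‖z - z₀‖ := norm_add_le _ _
    _ ≤ R := by rw [hRdef]; linarith
  have hBsum : Summable (fun n => |B n| * R ^ n) := summable_hypCoef ha hb hc1 R
  set eps : ℕ → ℝ := fun k => ∑' n, |B n| * (1 - t k n) * R ^ n with hepsdef
  have hbndsum : ∀ k, Summable (fun n => |B n| * (1 - t k n) * R ^ n) := by
    intro k
    refine Summable.of_nonneg_of_le (fun n => ?_) (fun n => ?_) hBsum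
    · exact mul_nonneg (mul_nonneg (abs_nonneg _) (by linarith [ht1 k n])) (pow_nonneg hR0 n)
    · have h3 : (0:ℝ) ≤ |B n| * t k n * R ^ n :=
        mul_nonneg (mul_nonneg (abs_nonneg _) (ht0 k n).le) (pow_nonneg hR0 n)
      rw [show |B n| * (1 - t k n) * R ^ n = |B n| * R ^ n - |B n| * t k n * R ^ n by ring]
      linarith [h3]
  have hsummB : ∀ (x : ℂ), Summable (fun n => ((B n:ℝ):ℂ) * x ^ n) := fun x =>
    (summable_hyp_norm ha hb hc1 x).of_norm
  have hsummv : ∀ k (x : ℂ), Summable (fun n => ((v k n:ℝ):ℂ) * x ^ n) := by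
    intro k x
    refine Summable.of_norm ?_
    refine Summable.of_nonneg_of_le (fun n => norm_nonneg _) (fun n => ?_)
      ((summable_hyp_norm ha hb hc1 x).congr (fun n => by
        rw [norm_mul, norm_pow, Complex.norm_real, Real.norm_eq_abs]))
    rw [norm_mul, norm_pow, Complex.norm_real, Real.norm_eq_abs]
    have h1 : |v k n| ≤ |B n| := by
      rw [hv, abs_mul, abs_of_pos (ht0 k n)]
      nlinarith [abs_nonneg (B n), ht0 k n, ht1 k n]
    exact mul_le_mul_of_nonneg_right h1 (pow_nonneg (norm_nonneg _) n)
  have hterm : ∀ k (z : ℂ), ‖z‖ ≤ R → ∀ n,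
      ‖((v k n:ℝ):ℂ) * z ^ n - ((B n:ℝ):ℂ) * z ^ n‖ ≤ |B n| * (1 - t k n) * R ^ n := by
    intro k z hzR' n
    have h1 : ((v k n:ℝ):ℂ) * z ^ n - ((B n:ℝ):ℂ) * z ^ n
        = (((v k n - B n : ℝ)):ℂ) * z ^ n := by push_cast; ring
    rw [h1, norm_mul, norm_pow, Complex.norm_real, Real.norm_eq_abs]
    have h2 : |v k n - B n| = |B n| * (1 - t k n) := by
      rw [hv, show B n * t k n - B n = -(B n * (1 - t k n)) by ring, abs_neg, abs_mul,
        abs_of_nonneg (by linarith [ht1 k n] : (0:ℝ) ≤ 1 - t k n)]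
    rw [h2]
    exact mul_le_mul_of_nonneg_left (pow_le_pow_left₀ (norm_nonneg z) hzR' n)
      (mul_nonneg (abs_nonneg _) (by linarith [ht1 k n]))
  have hbound : ∀ k, ∀ z ∈ Metric.closedBall z₀ rr, ‖g k z - F z‖ ≤ eps k := by
    intro k z hz
    have hzR' := hzR z hz
    have hsum1 : Summable (fun n => ‖((v k n:ℝ):ℂ) * z ^ n - ((B n:ℝ):ℂ) * z ^ n‖) :=
      Summable.of_nonneg_of_le (fun n => norm_nonneg _) (hterm k z hzR') (hbndsum k)
    have hdiff : g k z - F z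
        = ∑' n, (((v k n:ℝ):ℂ) * z ^ n - ((B n:ℝ):ℂ) * z ^ n) := by
      rw [hgt]
      show _ - (∑' n, ((B n:ℝ):ℂ) * z ^ n) = _
      exact (Summable.tsum_sub (hsummv k z) (hsummB z)).symm
    rw [hdiff]
    calc ‖∑' n, (((v k n:ℝ):ℂ) * z ^ n - ((B n:ℝ):ℂ) * z ^ n)‖
        ≤ ∑' n, ‖((v k n:ℝ):ℂ) * z ^ n - ((B n:ℝ):ℂ) * z ^ n‖ :=
          norm_tsum_le_tsum_norm hsum1
      _ ≤ eps k := Summable.tsum_le_tsum (hterm k z hzR') hsum1 (hbndsum k)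
  have heps : Tendsto eps atTop (𝓝 0) := by
    have h := tendsto_tsum_of_dominated_convergence (𝓕 := (atTop : Filter ℕ))
      (f := fun k n => |B n| * (1 - t k n) * R ^ n) (g := fun _ : ℕ => (0:ℝ))
      (bound := fun n => |B n| * R ^ n) hBsum ?_ ?_
    · simpa using h
    · intro n
      have h1 : Tendsto (fun k => |B n| * (1 - t k n) * R ^ n) atTop
          (𝓝 (|B n| * (1 - 1) * R ^ n)) :=
        ((tendsto_const_nhds.mul (tendsto_const_nhds.sub (httend n))).mul tendsto_const_nhds)
      simpa using h1
    · refine Eventually.of_forall fun k n => ?_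
      have h3 : (0:ℝ) ≤ |B n| * t k n * R ^ n :=
        mul_nonneg (mul_nonneg (abs_nonneg _) (ht0 k n).le) (pow_nonneg hR0 n)
      have h4 : (0:ℝ) ≤ |B n| * (1 - t k n) * R ^ n :=
        mul_nonneg (mul_nonneg (abs_nonneg _) (by linarith [ht1 k n])) (pow_nonneg hR0 n)
      show ‖|B n| * (1 - t k n) * R ^ n‖ ≤ |B n| * R ^ n
      rw [Real.norm_eq_abs, abs_of_nonneg h4,
        show |B n| * (1 - t k n) * R ^ n = |B n| * R ^ n - |B n| * t k n * R ^ n by ring]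
      linarith [h3]
  -- choose k
  obtain ⟨k, hk⟩ := (heps.eventually (gt_mem_nhds (half_pos hm0))).exists
  have hz₀ball : z₀ ∈ Metric.closedBall z₀ rr := Metric.mem_closedBall_self hrr0.le
  have hgz₀ : ‖g k z₀‖ ≤ eps k := by
    have h1 := hbound k z₀ hz₀ball
    rwa [hFz₀, sub_zero] at h1
  have hgz₀ne : g k z₀ ≠ 0 := hgz k z₀ him
  have hdc : DiffContOnCl ℂ (fun z => (g k z)⁻¹) (Metric.ball z₀ rr) := by
    constructor
    · intro z hz
      exact (((hganal k) z).inv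
        (hgz k z (hball_im z (Metric.ball_subset_closedBall hz)))).differentiableWithinAt
    · rw [closure_ball z₀ hrr0.ne']
      intro z hz
      exact (((hganal k) z).continuousAt.inv₀ (hgz k z (hball_im z hz))).continuousWithinAt
  have hfr : ∀ z ∈ frontier (Metric.ball z₀ rr), ‖(g k z)⁻¹‖ ≤ (m/2)⁻¹ := by
    rw [frontier_ball z₀ hrr0.ne']
    intro z hz
    have h1 : m ≤ ‖F z‖ := hz₁m hz
    have h2 : ‖g k z - F z‖ ≤ eps k := hbound k z (Metric.sphere_subset_closedBall hz)
    have h4 := abs_le.1 (abs_norm_sub_norm_le (g k z) (F z))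
    have h3 : m/2 ≤ ‖g k z‖ := by linarith [h4.1]
    rw [norm_inv]
    exact inv_anti₀ (half_pos hm0) h3
  have hmax := Complex.norm_le_of_forall_mem_frontier_norm_le Metric.isBounded_ball hdc hfr
    (by rw [closure_ball z₀ hrr0.ne']; exact hz₀ball)
  rw [norm_inv] at hmax
  have hfin : m/2 ≤ ‖g k z₀‖ := by
    have hg0 : 0 < ‖g k z₀‖ := norm_pos_iff.2 hgz₀ne
    have := (inv_le_inv₀ hg0 (half_pos hm0)).1 hmax
    linarith
  linarith
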